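/- arXiv:math/0306195 — 3 statements merged into one kernel-verified Lean document; each statement's English description precedes it below -/
import Mathlib

section
/- If M is a bigraded submodule of a free R-module F of finite rank, then M is (p,p')-saturated if and only if H^1_𝔪(M)_{k,k'} = 0 for all (k,k') ≥ (p,p'). Moreover, if M is (p,p')-regular, then M is (p,p')-saturated. -/
noncomputable section

open MvPolynomial Finset

/-- The saturation of a submodule `M ⊆ N` with respect to an ideal `J`:
`{x ∈ N : J^e • x ⊆ M for some e}`. -/
def satur {A : Type*} [CommRing A] {N : Type*} [AddCommGroup N] [Module A N]
    (J : Ideal A) (M : Submodule A N) : Submodule A N where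
  carrier := {x | ∃ e : ℕ, ∀ r ∈ J ^ e, r • x ∈ M}
  add_mem' := by
    rintro a b ⟨e₁, h₁⟩ ⟨e₂, h₂⟩
    refine ⟨max e₁ e₂, fun r hr => ?_⟩
    rw [smul_add]
    exact M.add_mem (h₁ r (Ideal.pow_le_pow_right (le_max_left _ _) hr))
      (h₂ r (Ideal.pow_le_pow_right (le_max_right _ _) hr))
  zero_mem' := ⟨0, fun r _ => by simp⟩
  smul_mem' := by
    rintro c x ⟨e, h⟩
    refine ⟨e, fun r hr => ?_⟩
    rw [smul_comm]
    exact M.smul_mem c (h r hr)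

section Koszul

variable {A : Type*} [CommRing A] {N : Type*} [AddCommGroup N] [Module A N]
variable {γ : Type*} [Fintype γ] [LinearOrder γ]

/-- The Koszul differential of the Koszul cochain complex on the `t`-th powers of the
family `f`, with coefficients in `N`.  A `k`-cochain is recorded as a function on all finite
subsets of `γ`; only its values on subsets of cardinality `k` are relevant. -/
def kosD (f : γ → A) (t : ℕ) (φ : Finset γ → N) : Finset γ → N := fun S =>
  ∑ j ∈ S, ((-1 : ℤ) ^ (S.filter (fun i => i < j)).card) • ((f j ^ t) • φ (S.erase j))

/-- The transition map from the Koszul complex on `f^t` to the one on `f^t'` (`t ≤ t'`). -/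
def kosT (f : γ → A) (t t' : ℕ) (φ : Finset γ → N) : Finset γ → N := fun S =>
  (∏ j ∈ S, f j ^ (t' - t)) • φ S

/-- `φ` is a `k`-cochain of the `t`-th Koszul complex on `f`, with values in the submodule
`M`, which is bihomogeneous of bidegree `d` (relative to the bihomogeneity notion `hom` on
`N` and the bidegrees `wf` of the members of `f`). -/
def IsKCochain (hom : ℤ × ℤ → Set N) (M : Submodule A N) (f : γ → A) (wf : γ → ℤ × ℤ)
    (d : ℤ × ℤ) (t k : ℕ) (φ : Finset γ → N) : Prop :=
  ∀ S : Finset γ, S.card = k → φ S ∈ M ∧ φ S ∈ hom (d + t • ∑ j ∈ S, wf j)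

/-- The bidegree-`d` graded piece of the local cohomology module `H^i_𝔪(M)` (`𝔪 = ⟨f⟩`)
vanishes.  Local cohomology is the direct limit over `t` of the cohomology of the Koszul
complexes on the powers `f^t`; its bidegree-`d` piece vanishes iff every bidegree-`d`
cocycle eventually becomes a coboundary. -/
def LCVanish (hom : ℤ × ℤ → Set N) (M : Submodule A N) (f : γ → A) (wf : γ → ℤ × ℤ)
    (i : ℕ) (d : ℤ × ℤ) : Prop :=
  ∀ (t : ℕ) (φ : Finset γ → N), IsKCochain hom M f wf d t i φ →
    (∀ S : Finset γ, S.card = i + 1 → kosD f t φ S = 0) →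
    ∃ t' : ℕ, t ≤ t' ∧ ∃ ψ : Finset γ → N, IsKCochain hom M f wf d t' (i - 1) ψ ∧
      ∀ S : Finset γ, S.card = i → kosT f t t' φ S = kosD f t' ψ S

/-- The region `Reg_j(p,p') = {(x,y) ∈ ℤ² : x ≥ p−j, y ≥ p'−j, x+y ≥ p+p'−j−1}`. -/
def RegSet (j p p' : ℤ) : Set (ℤ × ℤ) :=
  {q | p - j ≤ q.1 ∧ p' - j ≤ q.2 ∧ p + p' - j - 1 ≤ q.1 + q.2}

/-- `M` is `(p,p')`-regular: `H^i_𝔪(M)_{k,k'} = 0` whenever `(k,k') ∈ Reg_{i−1}(p,p')`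
(Definition 3.1 of Hoffman–Wang). -/
def IsBiregular (hom : ℤ × ℤ → Set N) (M : Submodule A N) (f : γ → A) (wf : γ → ℤ × ℤ)
    (p p' : ℤ) : Prop :=
  ∀ i : ℕ, ∀ d ∈ RegSet ((i : ℤ) - 1) p p', LCVanish hom M f wf i d

end Koszul

/-- The bigrading on `K[x_0,…,x_m,y_0,…,y_n]`: `deg x_i = (1,0)`, `deg y_j = (0,1)`. -/
def pw (m n : ℕ) : Fin (m + 1) ⊕ Fin (n + 1) → ℤ × ℤ :=
  Sum.elim (fun _ => ((1 : ℤ), (0 : ℤ))) (fun _ => ((0 : ℤ), (1 : ℤ)))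

/-- The generators `x_i y_j` of the irrelevant ideal `𝔪 = ⟨x_0,…,x_m⟩ ∩ ⟨y_0,…,y_n⟩`. -/
def irrGen (K : Type*) [Field K] (m n : ℕ) :
    Fin ((m + 1) * (n + 1)) → MvPolynomial (Fin (m + 1) ⊕ Fin (n + 1)) K := fun k =>
  X (Sum.inl (finProdFinEquiv.symm k).1) * X (Sum.inr (finProdFinEquiv.symm k).2)

/-- The irrelevant ideal `𝔪`. -/
def irrIdeal (K : Type*) [Field K] (m n : ℕ) :
    Ideal (MvPolynomial (Fin (m + 1) ⊕ Fin (n + 1)) K) :=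
  Ideal.span (Set.range (irrGen K m n))

/-- The bidegrees of the generators of `𝔪` (each `x_i y_j` has bidegree `(1,1)`). -/
def irrW (m n : ℕ) : Fin ((m + 1) * (n + 1)) → ℤ × ℤ := fun _ => (1, 1)

/-- The set of bihomogeneous elements of bidegree `d` in `R`. -/
def homR (K : Type*) [Field K] (m n : ℕ) (d : ℤ × ℤ) :
    Set (MvPolynomial (Fin (m + 1) ⊕ Fin (n + 1)) K) :=
  {f | f.IsWeightedHomogeneous (pw m n) d}

/-- The set of bihomogeneous elements of bidegree `d` in the free module `F = R^q`
(the generators of `F` sitting in bidegree `(0,0)`). -/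
def homF (K : Type*) [Field K] (m n q : ℕ) (d : ℤ × ℤ) :
    Set (Fin q → MvPolynomial (Fin (m + 1) ⊕ Fin (n + 1)) K) :=
  {x | ∀ i, (x i).IsWeightedHomogeneous (pw m n) d}

section Aux

variable {A : Type*} [CommRing A] {N : Type*} [AddCommGroup N] [Module A N]
variable {γ : Type*} [Fintype γ] [LinearOrder γ]

lemma kosD_singleton (f : γ → A) (t : ℕ) (ψ : Finset γ → N) (j : γ) :
    kosD f t ψ {j} = (f j ^ t) • ψ ∅ := by
  unfold kosD
  rw [Finset.sum_singleton]
  have h1 : ({j} : Finset γ).filter (fun i => i < j) = ∅ := by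
    rw [Finset.filter_singleton, if_neg (lt_irrefl j)]
  rw [h1, Finset.erase_singleton]
  simp

lemma kosD_pair (f : γ → A) (t : ℕ) (φ : Finset γ → N) {a b : γ} (hab : a < b) :
    kosD f t φ {a, b} = (f a ^ t) • φ {b} - (f b ^ t) • φ {a} := by
  have hne : a ≠ b := hab.ne
  unfold kosD
  rw [Finset.sum_pair hne]
  have e1 : ({a, b} : Finset γ).erase a = {b} :=
    Finset.erase_insert (by simp [hne])
  have e2 : ({a, b} : Finset γ).erase b = {a} := by
    rw [Finset.pair_comm]
    exact Finset.erase_insert (by simp [hne.symm])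
  have f1 : ({a, b} : Finset γ).filter (fun i => i < a) = ∅ := by
    ext i
    simp only [Finset.mem_filter, Finset.mem_insert, Finset.mem_singleton,
      Finset.notMem_empty, iff_false, not_and]
    rintro (rfl | rfl)
    · exact lt_irrefl _
    · exact fun h => absurd hab (not_lt.2 h.le)
  have f2 : ({a, b} : Finset γ).filter (fun i => i < b) = {a} := by
    ext i
    simp only [Finset.mem_filter, Finset.mem_insert, Finset.mem_singleton]
    constructor
    · rintro ⟨rfl | rfl, h⟩
      · rfl
      · exact absurd h (lt_irrefl _)
    · rintro rfl
      exact ⟨Or.inl rfl, hab⟩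
  rw [e1, e2, f1, f2]
  simp [sub_eq_add_neg]

lemma cocycle_pair (f : γ → A) (t : ℕ) (φ : Finset γ → N)
    (h : ∀ S : Finset γ, S.card = 2 → kosD f t φ S = 0) {a b : γ} (hne : a ≠ b) :
    (f a ^ t) • φ {b} = (f b ^ t) • φ {a} := by
  rcases hne.lt_or_gt with hab | hba
  · have h2 := h {a, b} (Finset.card_pair hne)
    rw [kosD_pair f t φ hab] at h2
    exact sub_eq_zero.mp h2
  · have h2 := h {b, a} (Finset.card_pair hne.symm)
    rw [kosD_pair f t φ hba] at h2
    exact (sub_eq_zero.mp h2).symm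

lemma kosD_eq_zero_of_comm (f : γ → A) (t : ℕ) (φ : Finset γ → N)
    (hsymm : ∀ a b : γ, a ≠ b → (f a ^ t) • φ {b} = (f b ^ t) • φ {a}) :
    ∀ S : Finset γ, S.card = 2 → kosD f t φ S = 0 := by
  intro S hS
  obtain ⟨a, b, hne, rfl⟩ := Finset.card_eq_two.mp hS
  rcases hne.lt_or_gt with hab | hba
  · rw [kosD_pair f t φ hab, hsymm a b hne, sub_self]
  · rw [Finset.pair_comm, kosD_pair f t φ hba, hsymm b a hne.symm, sub_self]

lemma span_pow_le (f : γ → A) (t : ℕ) (I : Ideal A) (h : ∀ j, f j ^ t ∈ I)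
    [Nonempty γ] : Ideal.span (Set.range f) ^ (Fintype.card γ * t) ≤ I := by
  have main : ∀ (s : Finset γ) (hs : s.Nonempty),
      (s.sup fun j => Ideal.span {f j}) ^ (s.card * t) ≤ I := by
    intro s hs
    induction hs using Finset.Nonempty.cons_induction with
    | singleton a =>
      rw [Finset.sup_singleton, Finset.card_singleton, one_mul,
        Ideal.span_singleton_pow]
      rw [Ideal.span_le, Set.singleton_subset_iff]
      exact h a
    | cons a s ha hs ih =>
      rw [Finset.sup_cons, Finset.card_cons, add_mul, one_mul, add_comm]
      refine le_trans Ideal.sup_pow_add_le_pow_sup_pow ?_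
      refine sup_le ?_ ih
      rw [Ideal.span_singleton_pow, Ideal.span_le, Set.singleton_subset_iff]
      exact h a
  have huniv := main Finset.univ Finset.univ_nonempty
  have hspan : Ideal.span (Set.range f) = Finset.univ.sup fun j => Ideal.span {f j} := by
    rw [Finset.sup_eq_iSup]
    simp only [Finset.mem_univ, iSup_pos]
    exact Submodule.span_range_eq_iSup
  rw [hspan, ← Finset.card_univ]
  exact huniv

end Aux

section MvAux

variable {K : Type*} [Field K] {σ : Type*}

/-- A monomial divides `g` if every exponent in `g` dominates it. -/
lemma monomial_dvd_of_coeff (ν : σ →₀ ℕ) (g : MvPolynomial σ K)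
    (h : ∀ μ, MvPolynomial.coeff μ g ≠ 0 → ν ≤ μ) :
    MvPolynomial.monomial ν (1 : K) ∣ g := by
  rw [MvPolynomial.monomial_one_dvd_iff_modMonomial_eq_zero]
  apply MvPolynomial.ext
  intro μ
  rw [MvPolynomial.coeff_zero]
  by_cases hle : ν ≤ μ
  · exact MvPolynomial.coeff_modMonomial_of_le g hle
  · rw [MvPolynomial.coeff_modMonomial_of_not_le g hle]
    by_contra hc
    exact hle (h μ hc)

/-- If `monomial ν 1 * g` is weighted homogeneous of degree `weight w ν + d`, then `g`
is weighted homogeneous of degree `d`. -/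
lemma isWeightedHomogeneous_of_monomial_mul {M : Type*} [AddCommGroup M]
    (w : σ → M) (ν : σ →₀ ℕ) (g : MvPolynomial σ K) (d : M)
    (h : (MvPolynomial.monomial ν (1 : K) * g).IsWeightedHomogeneous w
      (Finsupp.weight w ν + d)) : g.IsWeightedHomogeneous w d := by
  intro μ hμ
  have hc : MvPolynomial.coeff (ν + μ) (MvPolynomial.monomial ν (1 : K) * g)
      = MvPolynomial.coeff μ g := by
    rw [MvPolynomial.coeff_monomial_mul, one_mul]
  have h2 := h (show MvPolynomial.coeff (ν + μ) _ ≠ 0 by rw [hc]; exact hμ)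
  rw [map_add] at h2
  exact add_left_cancel h2

lemma weight_single' {M : Type*} [AddCommMonoid M] (w : σ → M) (s : σ) (c : ℕ) :
    Finsupp.weight w (Finsupp.single s c) = c • w s := by
  rw [Finsupp.weight_apply, Finsupp.sum_single_index]
  exact zero_smul _ _

lemma le_of_le_add_disj (u v w : σ →₀ ℕ) (h : ∀ s, u s ≠ 0 → v s = 0)
    (hle : u ≤ v + w) : u ≤ w := by
  rw [Finsupp.le_def] at hle ⊢
  intro s
  by_cases h0 : u s = 0
  · simp [h0]
  · have hs := hle s
    rw [Finsupp.add_apply, h s h0, zero_add] at hs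
    exact hs

end MvAux

/-!
STATEMENT 2: If `M` is a bigraded submodule of a free `R`-module `F` of finite rank, then
`M` is `(p,p')`-saturated iff `H^1_𝔪(M)_{k,k'} = 0` for all `(k,k') ≥ (p,p')`.
Moreover, if `M` is `(p,p')`-regular, then `M` is `(p,p')`-saturated.
-/
section Main

variable {K : Type*} [Field K] {m n q : ℕ}

lemma irrGen_ne_zero (K : Type*) [Field K] (m n : ℕ) (k : Fin ((m + 1) * (n + 1))) :
    irrGen K m n k ≠ 0 :=
  mul_ne_zero (X_ne_zero _) (X_ne_zero _)

lemma irrGen_pow_eq (K : Type*) [Field K] (m n : ℕ) (k : Fin ((m + 1) * (n + 1))) (t : ℕ) :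
    irrGen K m n k ^ t =
      monomial (Finsupp.single (Sum.inl (finProdFinEquiv.symm k).1 :
          Fin (m + 1) ⊕ Fin (n + 1)) t +
        Finsupp.single (Sum.inr (finProdFinEquiv.symm k).2) t) (1 : K) := by
  rw [irrGen, mul_pow, X_pow_eq_monomial, X_pow_eq_monomial, monomial_mul, one_mul]

lemma weight_pair (m n : ℕ) (a : Fin (m + 1)) (b : Fin (n + 1)) (t : ℕ) :
    Finsupp.weight (pw m n)
      (Finsupp.single (Sum.inl a : Fin (m + 1) ⊕ Fin (n + 1)) t +
        Finsupp.single (Sum.inr b) t) = t • (((1 : ℤ), (1 : ℤ)) : ℤ × ℤ) := by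
  rw [map_add, weight_single', weight_single', ← smul_add]
  congr 1

lemma irrGen_pow_homog (K : Type*) [Field K] (m n : ℕ) (k : Fin ((m + 1) * (n + 1))) (t : ℕ) :
    (irrGen K m n k ^ t).IsWeightedHomogeneous (pw m n)
      (t • (((1 : ℤ), (1 : ℤ)) : ℤ × ℤ)) := by
  rw [irrGen_pow_eq]
  exact isWeightedHomogeneous_monomial _ _ _ (weight_pair m n _ _ t)

set_option maxHeartbeats 1000000 in
/-- If `H^1_m(M)` vanishes in bidegree `d`, then `M` agrees with its saturation
in bidegree `d`. -/
lemma dirA (K : Type*) [Field K] (m n q : ℕ)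
    (M : Submodule (MvPolynomial (Fin (m + 1) ⊕ Fin (n + 1)) K)
      (Fin q → MvPolynomial (Fin (m + 1) ⊕ Fin (n + 1)) K))
    (d : ℤ × ℤ)
    (hLC : LCVanish (homF K m n q) M (irrGen K m n) (irrW m n) 1 d) :
    ∀ x ∈ satur (irrIdeal K m n) M, x ∈ homF K m n q d → x ∈ M := by
  have hpos : 0 < (m + 1) * (n + 1) := by positivity
  intro x hx hhom
  obtain ⟨e, he⟩ := hx
  set φ : Finset (Fin ((m + 1) * (n + 1))) →
      (Fin q → MvPolynomial (Fin (m + 1) ⊕ Fin (n + 1)) K) :=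
    fun S => (∏ j ∈ S, irrGen K m n j ^ e) • x with hφ
  have hφs : ∀ j, φ {j} = (irrGen K m n j ^ e) • x := by
    intro j; simp only [hφ, Finset.prod_singleton]
  have hmemM : ∀ j, φ {j} ∈ M := by
    intro j
    rw [hφs]
    exact he _ (Ideal.pow_mem_pow
      (show irrGen K m n j ∈ irrIdeal K m n from
        Ideal.subset_span (Set.mem_range_self j)) e)
  have hcochain : IsKCochain (homF K m n q) M (irrGen K m n) (irrW m n) d e 1 φ := by
    intro S hS
    obtain ⟨j, rfl⟩ := Finset.card_eq_one.mp hS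
    refine ⟨hmemM j, ?_⟩
    rw [hφs]
    intro i
    simp only [Pi.smul_apply, smul_eq_mul]
    have hmul := (irrGen_pow_homog K m n j e).mul (hhom i)
    have hdeg : (e • (((1 : ℤ), (1 : ℤ)) : ℤ × ℤ)) + d
        = d + e • ∑ j' ∈ ({j} : Finset _), irrW m n j' := by
      rw [Finset.sum_singleton, add_comm]; rfl
    rwa [hdeg] at hmul
  have hcocycle : ∀ S : Finset (Fin ((m + 1) * (n + 1))), S.card = 2 →
      kosD (irrGen K m n) e φ S = 0 := by
    refine kosD_eq_zero_of_comm _ _ _ ?_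
    intro a b hne
    rw [hφs, hφs, smul_smul, smul_smul, mul_comm]
  obtain ⟨t', ht', ψ, hψ, hcomp⟩ := hLC e φ hcochain hcocycle
  set j₀ : Fin ((m + 1) * (n + 1)) := ⟨0, hpos⟩ with hj₀
  have hc := hcomp {j₀} (Finset.card_singleton _)
  rw [kosD_singleton] at hc
  have hT : kosT (irrGen K m n) e t' φ {j₀} = (irrGen K m n j₀ ^ t') • x := by
    unfold kosT
    rw [Finset.prod_singleton, hφs, smul_smul, ← pow_add, Nat.sub_add_cancel ht']
  rw [hT] at hc
  have hy : ψ ∅ ∈ M := (hψ ∅ (by simp)).1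
  have hxy : x = ψ ∅ := by
    funext i
    have hci := congrFun hc i
    simp only [Pi.smul_apply, smul_eq_mul] at hci
    exact mul_left_cancel₀ (pow_ne_zero _ (irrGen_ne_zero K m n j₀)) hci
  rwa [hxy]

set_option maxHeartbeats 2000000 in
/-- If `M` agrees with its saturation in bidegree `d`, then `H^1_m(M)` vanishes
in bidegree `d`. -/
lemma dirB (K : Type*) [Field K] (m n q : ℕ) (hm : 1 ≤ m) (hn : 1 ≤ n)
    (M : Submodule (MvPolynomial (Fin (m + 1) ⊕ Fin (n + 1)) K)
      (Fin q → MvPolynomial (Fin (m + 1) ⊕ Fin (n + 1)) K))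
    (d : ℤ × ℤ)
    (hsat : ∀ x ∈ satur (irrIdeal K m n) M, x ∈ homF K m n q d → x ∈ M) :
    LCVanish (homF K m n q) M (irrGen K m n) (irrW m n) 1 d := by
  have hpos : 0 < (m + 1) * (n + 1) := by positivity
  haveI : Nonempty (Fin ((m + 1) * (n + 1))) := ⟨⟨0, hpos⟩⟩
  intro t φ hco hcy
  -- the two distinguished generators x₀y₀ and x₁y₁
  set a0 : Fin (m + 1) := ⟨0, by omega⟩ with ha0
  set a1 : Fin (m + 1) := ⟨1, by omega⟩ with ha1
  set b0 : Fin (n + 1) := ⟨0, by omega⟩ with hb0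
  set b1 : Fin (n + 1) := ⟨1, by omega⟩ with hb1
  set k00 : Fin ((m + 1) * (n + 1)) := finProdFinEquiv (a0, b0) with hk00
  set k11 : Fin ((m + 1) * (n + 1)) := finProdFinEquiv (a1, b1) with hk11
  have hk : k00 ≠ k11 := by
    intro hEq
    have h1 := congrArg (fun z => (finProdFinEquiv.symm z).1.1) hEq
    simp only [hk00, hk11, Equiv.symm_apply_apply, ha0, ha1] at h1
    omega
  set ν0 : ((Fin (m + 1) ⊕ Fin (n + 1)) →₀ ℕ) :=
    Finsupp.single (Sum.inl a0) t + Finsupp.single (Sum.inr b0) t with hν0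
  set ν1 : ((Fin (m + 1) ⊕ Fin (n + 1)) →₀ ℕ) :=
    Finsupp.single (Sum.inl a1) t + Finsupp.single (Sum.inr b1) t with hν1
  have hm0 : irrGen K m n k00 ^ t = monomial ν0 (1 : K) := by
    rw [irrGen_pow_eq, hν0, hk00, Equiv.symm_apply_apply]
  have hm1 : irrGen K m n k11 ^ t = monomial ν1 (1 : K) := by
    rw [irrGen_pow_eq, hν1, hk11, Equiv.symm_apply_apply]
  -- pairwise cocycle relations, componentwise
  have hpair : ∀ a b, a ≠ b → ∀ i,
      irrGen K m n a ^ t * φ {b} i = irrGen K m n b ^ t * φ {a} i := by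
    intro a b hne i
    have hcp := congrFun (cocycle_pair _ t φ hcy hne) i
    simpa using hcp
  -- ν0 and ν1 have disjoint supports
  have hdisj : ∀ s, ν0 s ≠ 0 → ν1 s = 0 := by
    intro s h0
    rcases s with sa | sb
    · have hsa : sa = a0 := by
        by_contra hc
        apply h0
        rw [hν0]
        simp [Finsupp.single_apply, Ne.symm hc]
      have hne1 : a1 ≠ sa := by
        rw [hsa, ha1, ha0]
        intro hc
        simpa using congrArg Fin.val hc
      rw [hν1]
      simp [Finsupp.single_apply, hne1]
    · have hsb : sb = b0 := by
        by_contra hc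
        apply h0
        rw [hν0]
        simp [Finsupp.single_apply, Ne.symm hc]
      have hne1 : b1 ≠ sb := by
        rw [hsb, hb1, hb0]
        intro hc
        simpa using congrArg Fin.val hc
      rw [hν1]
      simp [Finsupp.single_apply, hne1]
  -- the components of φ {k00} are divisible by the monomial ν0
  have hdvd : ∀ i, monomial ν0 (1 : K) ∣ φ {k00} i := by
    intro i
    apply monomial_dvd_of_coeff
    intro μ hμ
    have heq := hpair k11 k00 hk.symm i
    have h1 : MvPolynomial.coeff (ν1 + μ) (monomial ν1 (1 : K) * φ {k00} i)
        = MvPolynomial.coeff μ (φ {k00} i) := by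
      rw [MvPolynomial.coeff_monomial_mul, one_mul]
    rw [← hm1, heq, hm0, MvPolynomial.coeff_monomial_mul'] at h1
    by_cases hle : ν0 ≤ ν1 + μ
    · exact le_of_le_add_disj ν0 ν1 μ hdisj hle
    · rw [if_neg hle] at h1
      exact absurd h1.symm hμ
  choose xc hxc using hdvd
  -- the element xc satisfies f_j^t • xc = φ {j} for every j
  have hkey : ∀ j i, irrGen K m n j ^ t * xc i = φ {j} i := by
    intro j i
    have h00 : irrGen K m n k00 ^ t * xc i = φ {k00} i := by
      rw [hm0, ← hxc i]
    by_cases hj : j = k00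
    · subst hj; exact h00
    · have hp := hpair j k00 hj i
      have hmul : irrGen K m n k00 ^ t * (irrGen K m n j ^ t * xc i)
          = irrGen K m n k00 ^ t * φ {j} i := by
        rw [mul_left_comm, h00, hp]
      exact mul_left_cancel₀ (pow_ne_zero _ (irrGen_ne_zero K m n k00)) hmul
  -- xc is bihomogeneous of bidegree d
  have hxhom : xc ∈ homF K m n q d := by
    intro i
    apply isWeightedHomogeneous_of_monomial_mul (pw m n) ν0 _ d
    have hhom00 := (hco {k00} (Finset.card_singleton _)).2 i
    have hdeg : Finsupp.weight (pw m n) ν0 + d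
        = d + t • ∑ j' ∈ ({k00} : Finset _), irrW m n j' := by
      rw [hν0, weight_pair, Finset.sum_singleton, add_comm]; rfl
    rw [← hxc i, hdeg]
    exact hhom00
  -- xc lies in the saturation of M
  have hsatx : xc ∈ satur (irrIdeal K m n) M := by
    refine ⟨Fintype.card (Fin ((m + 1) * (n + 1))) * t, ?_⟩
    intro r hr
    have hI : ∀ j, irrGen K m n j ^ t ∈
        Submodule.comap (LinearMap.toSpanSingleton
          (MvPolynomial (Fin (m + 1) ⊕ Fin (n + 1)) K)
          (Fin q → MvPolynomial (Fin (m + 1) ⊕ Fin (n + 1)) K) xc) M := by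
      intro j
      simp only [Submodule.mem_comap, LinearMap.toSpanSingleton_apply]
      have hφj : (irrGen K m n j ^ t) • xc = φ {j} := by
        funext i
        simp only [Pi.smul_apply, smul_eq_mul]
        exact hkey j i
      rw [hφj]
      exact (hco {j} (Finset.card_singleton _)).1
    have hmem := span_pow_le (irrGen K m n) t _ hI hr
    simpa only [Submodule.mem_comap, LinearMap.toSpanSingleton_apply] using hmem
  have hxM : xc ∈ M := hsat xc hsatx hxhom
  -- conclude : take t' = t and the constant 0-cochain xc
  refine ⟨t, le_refl t, fun _ => xc, ?_, ?_⟩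
  · intro S hS
    have hSe : S = ∅ := Finset.card_eq_zero.mp (by simpa using hS)
    subst hSe
    refine ⟨hxM, ?_⟩
    intro i
    simpa using hxhom i
  · intro S hS
    obtain ⟨j, rfl⟩ := Finset.card_eq_one.mp hS
    rw [kosD_singleton]
    unfold kosT
    rw [Finset.prod_singleton, Nat.sub_self, pow_zero, one_smul]
    funext i
    simp only [Pi.smul_apply, smul_eq_mul]
    exact (hkey j i).symm

end Main

theorem stmt2 (K : Type*) [Field K] [Infinite K] (m n : ℕ) (hm : 1 ≤ m) (hn : 1 ≤ n)
    (q : ℕ)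
    (M : Submodule (MvPolynomial (Fin (m + 1) ⊕ Fin (n + 1)) K)
      (Fin q → MvPolynomial (Fin (m + 1) ⊕ Fin (n + 1)) K))
    (hbigraded : ∀ x ∈ M, ∀ d : ℤ × ℤ,
      (fun i => weightedHomogeneousComponent (pw m n) d (x i)) ∈ M)
    (p p' : ℤ) :
    -- `M` is `(p,p')`-saturated iff the pieces `H^1_𝔪(M)_{k,k'}` vanish for `(k,k') ≥ (p,p')`
    ((∀ d : ℤ × ℤ, (p, p') ≤ d →
        ∀ x ∈ satur (irrIdeal K m n) M, x ∈ homF K m n q d → x ∈ M) ↔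
      (∀ d : ℤ × ℤ, (p, p') ≤ d →
        LCVanish (homF K m n q) M (irrGen K m n) (irrW m n) 1 d)) ∧
    -- moreover, `(p,p')`-regular implies `(p,p')`-saturated
    (IsBiregular (homF K m n q) M (irrGen K m n) (irrW m n) p p' →
      ∀ d : ℤ × ℤ, (p, p') ≤ d →
        ∀ x ∈ satur (irrIdeal K m n) M, x ∈ homF K m n q d → x ∈ M) := by
  constructor
  · constructor
    · intro hs d hd
      exact dirB K m n q hm hn M d (fun x hx hh => hs d hd x hx hh)
    · intro hl d hd x hx hh
      exact dirA K m n q M d (hl d hd) x hx hh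
  · intro hreg d hd x hx hh
    refine dirA K m n q M d ?_ x hx hh
    refine hreg 1 d ?_
    have h1 : p ≤ d.1 := hd.1
    have h2 : p' ≤ d.2 := hd.2
    refine ⟨by push_cast; omega, by push_cast; omega, by push_cast; omega⟩
end
end

section
/- Let I ⊂ R = ℂ[s,u,t,v] be minimally generated by r ≥ 4 bihomogeneous forms f_1,…,f_r of bidegree (m,n) with m, n ≥ 1. Assume that the image of the rational map φ_I = [f_1,…,f_r] : P¹ × P¹ ⇢ P^{r−1} has dimension 2 and that V(I) ⊂ P¹ × P¹ is finite. Then for a generic linear form ℓ ∈ R_{1,0}, the image I_ℓ of I in the quotient ring R/⟨ℓ⟩ is minimally generated by at least 2 elements. -/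
/-!
Away from the finitely many first coordinates of points of `V(I)`, the fibre `{[x]} × P¹`
cut out by `ℓ` misses `V(I)`. Restriction to that fibre factors through `R/⟨ℓ⟩`, so if `I_ℓ`
were principal, the restricted generators, forms of degree `n ≥ 1` in `t, v` without a common
zero other than the origin, would generate a principal ideal `⟨w⟩`. But `w` lies in that ideal,
so it vanishes at the origin, hence (a polynomial in two variables over `ℂ`) at some other point
too, and that point is a common zero of the generators.
-/

noncomputable section

open MvPolynomial Finset

/-- The variables `s, u; t, v` of the ℤ²-graded ring `R = ℂ[s,u,t,v]`. -/
abbrev BVars := Fin 2 ⊕ Fin 2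

/-- `R = ℂ[s,u,t,v]`. -/
abbrev RB := MvPolynomial BVars ℂ

/-- The bigrading: `deg s = deg u = (1,0)`, `deg t = deg v = (0,1)`. -/
def bw : BVars → ℤ × ℤ :=
  Sum.elim (fun _ => ((1 : ℤ), (0 : ℤ))) (fun _ => ((0 : ℤ), (1 : ℤ)))

/-- The set of bihomogeneous elements of bidegree `d` of `R`. -/
def homB (d : ℤ × ℤ) : Set RB := {f | f.IsWeightedHomogeneous bw d}

/-- The generators `st, sv, ut, uv` of the irrelevant ideal `𝔪 = ⟨s,u⟩ ∩ ⟨t,v⟩`. -/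
def mGen : Fin 4 → RB :=
  ![X (Sum.inl 0) * X (Sum.inr 0), X (Sum.inl 0) * X (Sum.inr 1),
    X (Sum.inl 1) * X (Sum.inr 0), X (Sum.inl 1) * X (Sum.inr 1)]

/-- The bidegrees of the generators of `𝔪`. -/
def mW : Fin 4 → ℤ × ℤ := fun _ => (1, 1)

/-- The irrelevant ideal `𝔪 = ⟨s,u⟩ ∩ ⟨t,v⟩ = ⟨st, sv, ut, uv⟩`. -/
def mIdeal : Ideal RB := Ideal.span (Set.range mGen)

/-- Points of `P¹ × P¹` (over ℂ). -/
abbrev PtPP := Projectivization ℂ (Fin 2 → ℂ) × Projectivization ℂ (Fin 2 → ℂ)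

/-- Evaluation of a polynomial at (a representative of) a point of `P¹ × P¹`. -/
def evalP (p : PtPP) (g : RB) : ℂ := eval (Sum.elim p.1.rep p.2.rep) g

/-- The vanishing locus in `P¹ × P¹` of a set of (bihomogeneous) polynomials. -/
def biV (fs : Set RB) : Set PtPP := {p | ∀ g ∈ fs, evalP p g = 0}

/-- The point `p` of `V(⟨gens⟩)` is a local complete intersection: the stalk at `p` of
the ideal sheaf associated to `⟨gens⟩` is generated by two elements.  (Stalk elements are
fractions `w/h` with `w` bihomogeneous in the ideal and `h` bihomogeneous with `h(p) ≠ 0`.) -/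
def IsLCIat (gens : Set RB) (p : PtPP) : Prop :=
  ∃ f g : RB, f ∈ Ideal.span gens ∧ g ∈ Ideal.span gens ∧
    (∃ df : ℤ × ℤ, f ∈ homB df) ∧ (∃ dg : ℤ × ℤ, g ∈ homB dg) ∧
    ∀ w ∈ gens, ∃ h : RB, (∃ dh : ℤ × ℤ, h ∈ homB dh) ∧ evalP p h ≠ 0 ∧
      h * w ∈ Ideal.span {f, g}

/-- The bidegree-`d` graded piece of `R ⧸ J`, as a ℂ-subspace. -/
def quotPiece (J : Ideal RB) (d : ℤ × ℤ) : Submodule ℂ (RB ⧸ J) :=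
  (weightedHomogeneousSubmodule ℂ bw d).map (Ideal.Quotient.mkₐ ℂ J).toLinearMap

/-- `D = deg V(J)`: the degree of the zero-dimensional subscheme `V(J) ⊆ P¹ × P¹`,
i.e. the eventual (constant) value of `dim_ℂ (R/J^sat)_{k,k'}`. -/
def IsVDeg (J : Ideal RB) (D : ℕ) : Prop :=
  ∃ d₀ : ℤ × ℤ, ∀ d : ℤ × ℤ, d₀ ≤ d →
    Module.finrank ℂ (quotPiece (satur mIdeal J) d) = D

/-- The space of bidegree-`d` syzygies on the family `b`:
`{(A_i) : each A_i is bihomogeneous of bidegree d and ∑ A_i b_i = 0}`. -/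
def syzSpace {q : ℕ} (b : Fin q → RB) (d : ℤ × ℤ) : Submodule ℂ (Fin q → RB) :=
  (⨅ i, Submodule.comap (LinearMap.proj (R := ℂ) i)
      (weightedHomogeneousSubmodule ℂ bw d)) ⊓
    LinearMap.ker (∑ i, (LinearMap.mulLeft ℂ (b i)).comp (LinearMap.proj (R := ℂ) i))

namespace Polynomial

variable {K : Type*} [Field K] [IsAlgClosed K]

theorem exists_ne_zero_evalEval_eq_zero (Q : Polynomial (Polynomial K))
    (hQ : Q.evalEval 0 0 = 0) : ∃ x y : K, (x ≠ 0 ∨ y ≠ 0) ∧ Q.evalEval x y = 0 := by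
  by_cases hd : Q.natDegree = 0
  · obtain ⟨q, rfl⟩ := natDegree_eq_zero.mp hd
    rw [evalEval_C] at hQ
    exact ⟨0, 1, Or.inr one_ne_zero, by rwa [evalEval_C]⟩
  -- Over a generic `x ≠ 0` the leading coefficient survives, so `Q(x, ·)` keeps positive degree.
  obtain ⟨x, hx⟩ : ∃ x, (X * Q.leadingCoeff).eval x ≠ 0 := by
    by_contra! h
    exact mul_ne_zero X_ne_zero (leadingCoeff_ne_zero.mpr fun h0 => hd (by simp [h0]))
      (zero_of_eval_zero _ h)
  rw [eval_mul, eval_X, mul_ne_zero_iff] at hx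
  have hdeg : (Q.map (evalRingHom x)).natDegree = Q.natDegree :=
    natDegree_map_of_leadingCoeff_ne_zero _ hx.2
  obtain ⟨y, hy⟩ := IsAlgClosed.exists_root (Q.map (evalRingHom x))
    (by rw [degree_eq_natDegree (fun h => hd (by simp [← hdeg, h])), hdeg]; exact_mod_cast hd)
  exact ⟨x, y, Or.inl hx.1, by rwa [← map_evalRingHom_eval]⟩

theorem not_exists_span_range_eq_span_singleton {ι : Type*} (h : ι → Polynomial (Polynomial K))
    (h_zero : ∀ i, (h i).evalEval 0 0 = 0)
    (h_common : ∀ x y : K, (x ≠ 0 ∨ y ≠ 0) → ∃ i, (h i).evalEval x y ≠ 0) :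
    ¬ ∃ w, Ideal.span (Set.range h) = Ideal.span {w} := by
  rintro ⟨w, hw⟩
  have hw0 : w.evalEval 0 0 = 0 := by
    have hle : Ideal.span (Set.range h) ≤ RingHom.ker (evalEvalRingHom (0 : K) 0) :=
      Ideal.span_le.mpr (Set.range_subset_iff.mpr h_zero)
    exact hle (hw ▸ Ideal.mem_span_singleton_self w)
  obtain ⟨x, y, hxy, hwxy⟩ := exists_ne_zero_evalEval_eq_zero w hw0
  obtain ⟨i, hi⟩ := h_common x y hxy
  have hdvd : w ∣ h i := Ideal.mem_span_singleton.mp (hw ▸ Ideal.subset_span ⟨i, rfl⟩)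
  exact hi (zero_dvd_iff.mp (hwxy ▸ evalEval_dvd x y hdvd))

end Polynomial

theorem Ideal.map_eq_span_singleton_of_map_quotient {R S : Type*} [CommRing R] [CommRing S]
    {L I : Ideal R} (f : R →+* S) (hf : L ≤ RingHom.ker f) {z : R ⧸ L}
    (h : I.map (Ideal.Quotient.mk L) = Ideal.span {z}) :
    I.map f = Ideal.span {Ideal.Quotient.lift L f (fun _ ha => RingHom.mem_ker.mp (hf ha)) z} := by
  rw [← Set.image_singleton, ← Ideal.map_span, ← h, Ideal.map_map,
    Ideal.Quotient.lift_comp_mk]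

theorem exponent_sums_of_weight_bw_eq {d : BVars →₀ ℕ} {m n : ℕ}
    (h : Finsupp.weight bw d = ((m : ℤ), (n : ℤ))) :
    d (Sum.inl 0) + d (Sum.inl 1) = m ∧ d (Sum.inr 0) + d (Sum.inr 1) = n := by
  rw [Finsupp.weight_apply, Finsupp.sum_fintype _ _ fun i => zero_smul ℕ (bw i),
    Fintype.sum_sum_type] at h
  simp only [bw, Sum.elim_inl, Sum.elim_inr, Fin.sum_univ_two, Prod.smul_mk, smul_zero,
    Prod.mk_add_mk, Prod.mk.injEq, nsmul_eq_mul, mul_one] at h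
  omega

theorem eval_sumElim_smul {f : RB} {m n : ℕ}
    (hf : f.IsWeightedHomogeneous bw ((m : ℤ), (n : ℤ)))
    (a b : ℂ) (x y : Fin 2 → ℂ) :
    eval (Sum.elim (a • x) (b • y)) f = a ^ m * b ^ n * eval (Sum.elim x y) f := by
  rw [eval_eq', eval_eq', Finset.mul_sum]
  refine Finset.sum_congr rfl fun d hd => ?_
  obtain ⟨hm, hn⟩ := exponent_sums_of_weight_bw_eq (hf (mem_support_iff.mp hd))
  simp only [Fintype.prod_sum_type, Sum.elim_inl, Sum.elim_inr, Fin.prod_univ_two, Pi.smul_apply,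
    smul_eq_mul, mul_pow, ← hm, ← hn]
  ring

theorem eval_sumElim_zero_right {f : RB} {m n : ℕ} (hn : 1 ≤ n)
    (hf : f.IsWeightedHomogeneous bw ((m : ℤ), (n : ℤ))) (x : Fin 2 → ℂ) :
    eval (Sum.elim x 0) f = 0 := by
  simpa [zero_pow (Nat.one_le_iff_ne_zero.mp hn)] using eval_sumElim_smul hf 1 0 x 0

theorem evalP_mk_eq_zero {f : RB} {m n : ℕ}
    (hf : f.IsWeightedHomogeneous bw ((m : ℤ), (n : ℤ)))
    {x y : Fin 2 → ℂ} (hx : x ≠ 0) (hy : y ≠ 0) (hxy : eval (Sum.elim x y) f = 0) :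
    evalP (Projectivization.mk ℂ x hx, Projectivization.mk ℂ y hy) f = 0 := by
  obtain ⟨a, ha⟩ := Projectivization.exists_smul_eq_mk_rep ℂ x hx
  obtain ⟨b, hb⟩ := Projectivization.exists_smul_eq_mk_rep ℂ y hy
  rw [evalP, ← ha, ← hb, Units.smul_def, Units.smul_def, eval_sumElim_smul hf, hxy, mul_zero]

def restrictFibre (x : Fin 2 → ℂ) : RB →+* Polynomial (Polynomial ℂ) :=
  eval₂Hom (algebraMap ℂ _)
    (Sum.elim (fun i => algebraMap ℂ _ (x i)) ![Polynomial.C Polynomial.X, Polynomial.X])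

theorem evalEval_restrictFibre (x : Fin 2 → ℂ) (t v : ℂ) (f : RB) :
    (restrictFibre x f).evalEval t v = eval (Sum.elim x ![t, v]) f := by
  suffices h : (Polynomial.evalEvalRingHom t v).comp (restrictFibre x) =
      eval (Sum.elim x ![t, v]) from RingHom.congr_fun h f
  refine ringHom_ext (fun a => by simp [restrictFibre]) fun i => ?_
  rcases i with i | i <;> fin_cases i <;> simp [restrictFibre]

theorem restrictFibre_linearForm_eq_zero (c : Fin 2 → ℂ) :
    restrictFibre ![-c 1, c 0] (C (c 0) * X (Sum.inl 0) + C (c 1) * X (Sum.inl 1)) = 0 := by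
  simp only [restrictFibre, map_add, map_mul, eval₂Hom_C, eval₂Hom_X', Sum.elim_inl,
    Matrix.cons_val_zero, Matrix.cons_val_one]
  rw [← map_mul, ← map_mul, ← map_add, mul_neg, mul_comm, neg_add_cancel, map_zero]

theorem not_exists_map_restrictFibre_eq_span_singleton {ι : Type*} {m n : ℕ} (hn : 1 ≤ n)
    {g : ι → RB} (hg : ∀ i, (g i).IsWeightedHomogeneous bw ((m : ℤ), (n : ℤ)))
    {x : Fin 2 → ℂ} (hx : x ≠ 0)
    (hxV : ∀ p ∈ biV (Set.range g), p.1 ≠ Projectivization.mk ℂ x hx) :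
    ¬ ∃ w, (Ideal.span (Set.range g)).map (restrictFibre x) = Ideal.span {w} := by
  rw [Ideal.map_span, ← Set.range_comp]
  refine Polynomial.not_exists_span_range_eq_span_singleton _ (fun i => ?_) fun t v htv => ?_
  · simpa [evalEval_restrictFibre, ← Matrix.zero_empty, Matrix.cons_zero_zero]
      using eval_sumElim_zero_right hn (hg i) x
  · by_contra! h
    have hy : ![t, v] ≠ 0 := by
      contrapose! htv
      exact ⟨by simpa using congrFun htv 0, by simpa using congrFun htv 1⟩
    refine hxV (Projectivization.mk ℂ x hx, Projectivization.mk ℂ _ hy) ?_ rfl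
    rintro _ ⟨i, rfl⟩
    exact evalP_mk_eq_zero (hg i) hx hy (by rw [← evalEval_restrictFibre]; exact h i)

-- `[-c 1 : c 0]` is the zero on `P¹` of the linear form `c 0 * s + c 1 * u`.
theorem exists_ne_zero_forall_eval_ne_zero_mk_notMem {K : Type*} [Field K]
    (S : Finset (Projectivization K (Fin 2 → K))) :
    ∃ P : MvPolynomial (Fin 2) K, P ≠ 0 ∧ ∀ c, eval c P ≠ 0 →
      ∃ hc : ![-c 1, c 0] ≠ 0, Projectivization.mk K _ hc ∉ S := by
  refine ⟨X 0 * ∏ q ∈ S, (C (q.rep 0) * X 0 + C (q.rep 1) * X 1), ?_, fun c hc => ?_⟩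
  · refine mul_ne_zero (X_ne_zero _) (Finset.prod_ne_zero_iff.mpr fun q _ hq => q.rep_nonzero ?_)
    funext i
    fin_cases i
    · simpa using congrArg (eval ![1, 0]) hq
    · simpa using congrArg (eval ![0, 1]) hq
  rw [eval_mul, eval_X, mul_ne_zero_iff, eval_prod, Finset.prod_ne_zero_iff] at hc
  have hne : ![-c 1, c 0] ≠ 0 := fun h => hc.1 (by simpa using congrFun h 1)
  refine ⟨hne, fun hS => hc.2 _ hS ?_⟩
  obtain ⟨a, ha⟩ := Projectivization.exists_smul_eq_mk_rep K _ hne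
  simp only [← ha, Units.smul_def, eval_add, eval_mul, eval_C, eval_X, Pi.smul_apply, smul_eq_mul,
    Matrix.cons_val_zero, Matrix.cons_val_one]
  ring

theorem stmt7_general (m n r : ℕ) (hn : 1 ≤ n)
    (g : Fin r → RB) (I : Ideal RB) (hI : I = Ideal.span (Set.range g))
    (hbihom : ∀ i, (g i).IsWeightedHomogeneous bw ((m : ℤ), (n : ℤ)))
    (hfin : (biV (Set.range g)).Finite) :
    ∃ P : MvPolynomial (Fin 2) ℂ, P ≠ 0 ∧
      ∀ c : Fin 2 → ℂ, eval c P ≠ 0 →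
        ¬ ∃ z : RB ⧸ Ideal.span {C (c 0) * X (Sum.inl 0) + C (c 1) * X (Sum.inl 1)},
          Ideal.map
            (Ideal.Quotient.mk
              (Ideal.span {C (c 0) * X (Sum.inl 0) + C (c 1) * X (Sum.inl 1)})) I =
          Ideal.span {z} := by
  classical
  obtain ⟨P, hP, hPc⟩ :=
    exists_ne_zero_forall_eval_ne_zero_mk_notMem (hfin.toFinset.image Prod.fst)
  refine ⟨P, hP, fun c hc ⟨z, hz⟩ => ?_⟩
  obtain ⟨hx, hxS⟩ := hPc c hc
  have hker : Ideal.span {C (c 0) * X (Sum.inl 0) + C (c 1) * X (Sum.inl 1)} ≤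
      RingHom.ker (restrictFibre ![-c 1, c 0]) := by
    rw [Ideal.span_singleton_le_iff_mem, RingHom.mem_ker]
    exact restrictFibre_linearForm_eq_zero c
  subst hI
  exact not_exists_map_restrictFibre_eq_span_singleton hn hbihom hx
    (fun p hp h1 => hxS (h1 ▸ Finset.mem_image_of_mem _ (hfin.mem_toFinset.mpr hp)))
    ⟨_, Ideal.map_eq_span_singleton_of_map_quotient _ hker hz⟩

theorem stmt7 (m n r : ℕ) (hm : 1 ≤ m) (hn : 1 ≤ n) (hr : 4 ≤ r)
    (g : Fin r → RB) (I : Ideal RB) (hI : I = Ideal.span (Set.range g))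
    (hbihom : ∀ i, (g i).IsWeightedHomogeneous bw ((m : ℤ), (n : ℤ)))
    (hmin : LinearIndependent ℂ g)
    (hdim : ringKrullDim (Algebra.adjoin ℂ (Set.range g)) = 3)
    (hfin : (biV (Set.range g)).Finite) :
    ∃ P : MvPolynomial (Fin 2) ℂ, P ≠ 0 ∧
      ∀ c : Fin 2 → ℂ, eval c P ≠ 0 →
        ¬ ∃ z : RB ⧸ Ideal.span {C (c 0) * X (Sum.inl 0) + C (c 1) * X (Sum.inl 1)},
          Ideal.map
            (Ideal.Quotient.mk
              (Ideal.span {C (c 0) * X (Sum.inl 0) + C (c 1) * X (Sum.inl 1)})) I =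
          Ideal.span {z} :=
  stmt7_general m n r hn g I hI hbihom hfin
end
end

section
/- Let φ : P¹ × P¹ → P³ be given by φ = [a_0, a_1, a_2, a_3] with each a_i bihomogeneous of bidegree (m,n), and assume φ satisfies condition B6 (Syz(a_0,a_1,a_2)_{m−1,n−1} = {0}). Let 𝒮 be the space of moving planes of bidegree (m−1,n−1) following φ, and suppose dim_ℂ 𝒮 = k. Then 𝒬 = Σ_{i=0}^{3} 𝒮·x_i is a space of moving quadrics following φ with dim_ℂ 𝒬 = 4k. -/
noncomputable section

open MvPolynomial Finset

/-- The products `a_i a_j`, `0 ≤ i ≤ j ≤ 3`, in the order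
`[a₀², a₀a₁, a₀a₂, a₀a₃, a₁², a₁a₂, a₁a₃, a₂², a₂a₃, a₃²]`. -/
def prods (a : Fin 4 → RB) : Fin 10 → RB :=
  ![a 0 * a 0, a 0 * a 1, a 0 * a 2, a 0 * a 3, a 1 * a 1,
    a 1 * a 2, a 1 * a 3, a 2 * a 2, a 2 * a 3, a 3 * a 3]

/-- The moving plane `∑ A_i x_i` determined by a `4`-tuple of coefficients `A_i ∈ R`. -/
def planePoly (A : Fin 4 → RB) : MvPolynomial (Fin 4) RB :=
  ∑ i, MvPolynomial.C (A i) * MvPolynomial.X i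

/-- The ten monomials `x_i x_j`, `0 ≤ i ≤ j ≤ 3`. -/
def qmon : Fin 10 → MvPolynomial (Fin 4) RB :=
  ![X 0 * X 0, X 0 * X 1, X 0 * X 2, X 0 * X 3, X 1 * X 1,
    X 1 * X 2, X 1 * X 3, X 2 * X 2, X 2 * X 3, X 3 * X 3]

/-- The moving quadric `∑_{i≤j} A_{ij} x_i x_j` determined by a `10`-tuple of
coefficients. -/
def quadPoly (B : Fin 10 → RB) : MvPolynomial (Fin 4) RB :=
  ∑ r, MvPolynomial.C (B r) * qmon r

/-- The space of moving planes of bidegree `d` following `φ = [a₀,a₁,a₂,a₃]`. -/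
def MPspace (a : Fin 4 → RB) (d : ℤ × ℤ) : Submodule ℂ (MvPolynomial (Fin 4) RB) :=
  Submodule.span ℂ (planePoly '' (syzSpace a d : Set (Fin 4 → RB)))

/-- The space of moving quadrics of bidegree `d` following `φ = [a₀,a₁,a₂,a₃]`. -/
def MQspace (a : Fin 4 → RB) (d : ℤ × ℤ) : Submodule ℂ (MvPolynomial (Fin 4) RB) :=
  Submodule.span ℂ (quadPoly '' (syzSpace (prods a) d : Set (Fin 10 → RB)))

/-- `𝒬 = ∑_{i=0}^{3} 𝒮·x_i`: the space spanned by the products of the moving planes of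
bidegree `d` following `φ` with the coordinates `x_0,…,x_3`. -/
def xMPspace (a : Fin 4 → RB) (d : ℤ × ℤ) : Submodule ℂ (MvPolynomial (Fin 4) RB) :=
  Submodule.span ℂ
    (⋃ i : Fin 4, (fun P => P * MvPolynomial.X i) '' (MPspace a d : Set (MvPolynomial (Fin 4) RB)))

namespace Stmt17Aux

lemma mem_syz {q : ℕ} (b : Fin q → RB) (d : ℤ × ℤ) (v : Fin q → RB) :
    v ∈ syzSpace b d ↔
      (∀ i, v i ∈ weightedHomogeneousSubmodule ℂ bw d) ∧ ∑ i, b i * v i = 0 := by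
  simp [syzSpace, Submodule.mem_inf, Submodule.mem_iInf, LinearMap.mem_ker,
    LinearMap.sum_apply, LinearMap.mulLeft_apply, LinearMap.comp_apply]

/-- the linear map `A ↦ planePoly A`. -/
def planePolyₗ : (Fin 4 → RB) →ₗ[ℂ] MvPolynomial (Fin 4) RB :=
  ∑ i : Fin 4, (LinearMap.mulRight ℂ (MvPolynomial.X i)).comp
    (((Algebra.linearMap RB (MvPolynomial (Fin 4) RB)).restrictScalars ℂ).comp
      (LinearMap.proj i))

lemma planePolyₗ_apply (A : Fin 4 → RB) : planePolyₗ A = planePoly A := by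
  simp [planePolyₗ, planePoly, MvPolynomial.algebraMap_eq]

def idx : Fin 4 → Fin 4 → Fin 10 :=
  ![![0,1,2,3], ![1,4,5,6], ![2,5,7,8], ![3,6,8,9]]

lemma qmon_idx (j i : Fin 4) : qmon (idx j i) = X j * X i := by
  fin_cases j <;> fin_cases i <;> first | rfl | exact mul_comm _ _

lemma prods_idx (a : Fin 4 → RB) (j i : Fin 4) : prods a (idx j i) = a j * a i := by
  fin_cases j <;> fin_cases i <;> first | rfl | exact mul_comm _ _

def psi (A : Fin 4 → RB) (i : Fin 4) : Fin 10 → RB :=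
  fun r => ∑ j, if r = idx j i then A j else 0

lemma quadPoly_psi (A : Fin 4 → RB) (i : Fin 4) :
    quadPoly (psi A i) = planePoly A * X i := by
  have h1 : ∀ r, (C (psi A i r) : MvPolynomial (Fin 4) RB) * qmon r
      = ∑ j, if r = idx j i then C (A j) * qmon r else 0 := by
    intro r
    rw [psi, map_sum, Finset.sum_mul]
    refine Finset.sum_congr rfl fun j _ => ?_
    split_ifs <;> simp
  rw [quadPoly]
  simp_rw [h1]
  rw [Finset.sum_comm]
  have h2 : ∀ j, (∑ r, if r = idx j i then (C (A j) : MvPolynomial (Fin 4) RB) * qmon r else 0)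
      = C (A j) * qmon (idx j i) := fun j => by simp
  simp_rw [h2, qmon_idx]
  rw [planePoly, Finset.sum_mul]
  simp [mul_assoc]

lemma psi_mem (a : Fin 4 → RB) (d : ℤ × ℤ) (A : Fin 4 → RB) (hA : A ∈ syzSpace a d)
    (i : Fin 4) : psi A i ∈ syzSpace (prods a) d := by
  rw [mem_syz] at hA ⊢
  obtain ⟨hW, hs⟩ := hA
  constructor
  · intro r
    refine Submodule.sum_mem _ fun j _ => ?_
    split_ifs
    · exact hW j
    · exact Submodule.zero_mem _
  · calc ∑ r, prods a r * psi A i r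
        = ∑ r, ∑ j, (if r = idx j i then prods a r * A j else 0) := by
          refine Finset.sum_congr rfl fun r _ => ?_
          rw [psi, Finset.mul_sum]
          exact Finset.sum_congr rfl fun j _ => by split_ifs <;> simp
      _ = ∑ j, prods a (idx j i) * A j := by rw [Finset.sum_comm]; simp
      _ = a i * ∑ j, a j * A j := by
          rw [Finset.mul_sum]
          exact Finset.sum_congr rfl fun j _ => by rw [prods_idx]; ring
      _ = 0 := by rw [hs, mul_zero]

lemma eval_planePoly (φ : Fin 4 → RB) (A : Fin 4 → RB) :
    eval φ (planePoly A) = ∑ j, A j * φ j := by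
  simp [planePoly]

lemma planePolyₗ_inj : Function.Injective planePolyₗ := by
  rw [← LinearMap.ker_eq_bot]
  rw [Submodule.eq_bot_iff]
  intro A hA
  rw [LinearMap.mem_ker, planePolyₗ_apply] at hA
  funext p
  have := congrArg (eval fun j => if j = p then (1 : RB) else 0) hA
  simpa [eval_planePoly, mul_ite, Finset.sum_ite_eq'] using this




lemma MPspace_eq (a : Fin 4 → RB) (d : ℤ × ℤ) :
    MPspace a d = Submodule.map planePolyₗ (syzSpace a d) := by
  rw [MPspace, show planePoly = ⇑planePolyₗ from (funext planePolyₗ_apply).symm,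
    Submodule.span_image, Submodule.span_eq]

lemma sum_planePoly_eq_zero {a : Fin 4 → RB} {d : ℤ × ℤ}
    (hB6 : syzSpace ![a 0, a 1, a 2] d = ⊥)
    (B : Fin 4 → Fin 4 → RB) (hv : ∀ i, B i ∈ syzSpace a d)
    (h : ∑ i, planePoly (B i) * X i = 0) : ∀ i, B i = 0 := by
  have hEval : ∀ φ : Fin 4 → RB, ∑ i, (∑ j, B i j * φ j) * φ i = 0 := by
    intro φ
    have := congrArg (eval φ) h
    simpa [map_sum, eval_planePoly] using this
  have hd : ∀ p, B p p = 0 := by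
    intro p
    have := hEval (fun j => if j = p then 1 else 0)
    simpa [mul_ite, ite_mul, Finset.sum_ite_eq'] using this
  have ho : ∀ p q, B p q + B q p = 0 := by
    intro p q
    have := hEval (fun j => (if j = p then 1 else 0) + (if j = q then 1 else 0))
    simp only [mul_add, add_mul, mul_ite, ite_mul, mul_one, mul_zero, one_mul, zero_mul,
      Finset.sum_add_distrib, Finset.sum_ite_eq', Finset.mem_univ, if_true] at this
    linear_combination this - hd p - hd q
  have hW : ∀ i j, B i j ∈ weightedHomogeneousSubmodule ℂ bw d :=
    fun i j => ((mem_syz _ _ _).1 (hv i)).1 j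
  have hs : ∀ i, a 0 * B i 0 + a 1 * B i 1 + a 2 * B i 2 + a 3 * B i 3 = 0 := by
    intro i
    have := ((mem_syz _ _ _).1 (hv i)).2
    -- reorder sum: it is ∑ j, a j * B i j
    calc a 0 * B i 0 + a 1 * B i 1 + a 2 * B i 2 + a 3 * B i 3
        = ∑ j, a j * B i j := by rw [Fin.sum_univ_four]
      _ = 0 := this
  have b6' : ∀ p0 p1 p2 : RB, p0 ∈ weightedHomogeneousSubmodule ℂ bw d →
      p1 ∈ weightedHomogeneousSubmodule ℂ bw d →
      p2 ∈ weightedHomogeneousSubmodule ℂ bw d →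
      a 0 * p0 + a 1 * p1 + a 2 * p2 = 0 → p0 = 0 ∧ p1 = 0 ∧ p2 = 0 := by
    intro p0 p1 p2 h0 h1 h2 hsum
    have hm : ![p0, p1, p2] ∈ syzSpace ![a 0, a 1, a 2] d := by
      rw [mem_syz]
      refine ⟨fun i => ?_, ?_⟩
      · fin_cases i <;> assumption
      · rw [Fin.sum_univ_three]
        simpa using hsum
    rw [hB6, Submodule.mem_bot] at hm
    exact ⟨by simpa using congrFun hm 0, by simpa using congrFun hm 1,
      by simpa using congrFun hm 2⟩
  have h3 : B 3 = 0 := by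
    obtain ⟨e0, e1, e2⟩ := b6' (B 3 0) (B 3 1) (B 3 2) (hW 3 0) (hW 3 1) (hW 3 2)
      (by linear_combination hs 3 - a 3 * hd 3)
    funext j; fin_cases j
    exacts [e0, e1, e2, hd 3]
  have hi3 : ∀ i, B i 3 = 0 := fun i => by
    have hz := congrFun h3 i
    simp only [Pi.zero_apply] at hz
    linear_combination ho i 3 - hz
  have h2 : B 2 = 0 := by
    obtain ⟨e0, e1, -⟩ := b6' (B 2 0) (B 2 1) 0 (hW 2 0) (hW 2 1) (Submodule.zero_mem _)
      (by linear_combination hs 2 - a 2 * hd 2 - a 3 * hi3 2)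
    funext j; fin_cases j
    exacts [e0, e1, hd 2, hi3 2]
  have hi2 : ∀ i, B i 2 = 0 := fun i => by
    have hz := congrFun h2 i
    simp only [Pi.zero_apply] at hz
    linear_combination ho i 2 - hz
  have h1 : B 1 = 0 := by
    obtain ⟨e0, -, -⟩ := b6' (B 1 0) 0 0 (hW 1 0) (Submodule.zero_mem _) (Submodule.zero_mem _)
      (by linear_combination hs 1 - a 1 * hd 1 - a 2 * hi2 1 - a 3 * hi3 1)
    funext j; fin_cases j
    exacts [e0, hd 1, hi2 1, hi3 1]
  have hi1 : ∀ i, B i 1 = 0 := fun i => by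
    have hz := congrFun h1 i
    simp only [Pi.zero_apply] at hz
    linear_combination ho i 1 - hz
  have h0 : B 0 = 0 := by
    funext j; fin_cases j
    exacts [hd 0, hi1 0, hi2 0, hi3 0]
  intro i; fin_cases i
  exacts [h0, h1, h2, h3]

def Fmap (a : Fin 4 → RB) (d : ℤ × ℤ) :
    (Fin 4 → ↥(syzSpace a d)) →ₗ[ℂ] MvPolynomial (Fin 4) RB :=
  ∑ i : Fin 4, (LinearMap.mulRight ℂ (X i : MvPolynomial (Fin 4) RB)).comp
    (planePolyₗ.comp ((Submodule.subtype (syzSpace a d)).comp (LinearMap.proj i)))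

lemma Fmap_apply (a : Fin 4 → RB) (d : ℤ × ℤ) (v : Fin 4 → ↥(syzSpace a d)) :
    Fmap a d v = ∑ i, planePoly (v i : Fin 4 → RB) * X i := by
  simp [Fmap, planePolyₗ_apply]

lemma range_Fmap (a : Fin 4 → RB) (d : ℤ × ℤ) :
    LinearMap.range (Fmap a d) = xMPspace a d := by
  apply le_antisymm
  · rintro x ⟨v, rfl⟩
    rw [Fmap_apply]
    refine Submodule.sum_mem _ fun i _ => ?_
    apply Submodule.subset_span
    refine Set.mem_iUnion.2 ⟨i, ⟨planePoly (v i : Fin 4 → RB), ?_, rfl⟩⟩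
    exact Submodule.subset_span ⟨(v i : Fin 4 → RB), (v i).2, rfl⟩
  · rw [xMPspace, Submodule.span_le]
    rintro x hx
    obtain ⟨i, hmem⟩ := Set.mem_iUnion.1 hx
    obtain ⟨P, hP, rfl⟩ := hmem
    rw [SetLike.mem_coe, MPspace_eq] at hP
    obtain ⟨A, hA, rfl⟩ := hP
    refine ⟨Pi.single i ⟨A, hA⟩, ?_⟩
    rw [Fmap_apply, Finset.sum_eq_single i]
    · rw [Pi.single_eq_same, planePolyₗ_apply]
    · intro j _ hj
      rw [Pi.single_eq_of_ne hj]
      simp [planePoly]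
    · simp

lemma Fmap_inj {a : Fin 4 → RB} {d : ℤ × ℤ}
    (hB6 : syzSpace ![a 0, a 1, a 2] d = ⊥) :
    Function.Injective (Fmap a d) := by
  rw [← LinearMap.ker_eq_bot, Submodule.eq_bot_iff]
  intro v hv
  rw [LinearMap.mem_ker, Fmap_apply] at hv
  have := sum_planePoly_eq_zero hB6 (fun i => (v i : Fin 4 → RB)) (fun i => (v i).2) hv
  funext i
  exact Subtype.ext (this i)

end Stmt17Aux

open Stmt17Aux

/-!
STATEMENT 17: Let `φ = [a₀,a₁,a₂,a₃] : P¹ × P¹ → P³` with each `a_i` bihomogeneous of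
bidegree `(m,n)`, and assume condition B6: `Syz(a₀,a₁,a₂)_{m−1,n−1} = 0`.  Let `𝒮` be the
space of moving planes of bidegree `(m−1,n−1)` following `φ`, with `dim_ℂ 𝒮 = k`.
Then `𝒬 = ∑_{i=0}^{3} 𝒮·x_i` is a space of moving quadrics following `φ` with
`dim_ℂ 𝒬 = 4k`.
-/
theorem stmt17 (m n k : ℕ) (hm : 1 ≤ m) (hn : 1 ≤ n)
    (a : Fin 4 → RB)
    (hbihom : ∀ i, (a i).IsWeightedHomogeneous bw ((m : ℤ), (n : ℤ)))
    -- B6: `Syz(a₀,a₁,a₂)_{m−1,n−1} = 0`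
    (hB6 : syzSpace ![a 0, a 1, a 2] ((m : ℤ) - 1, (n : ℤ) - 1) = ⊥)
    -- `dim_ℂ 𝒮 = k`
    (hk : Module.finrank ℂ (MPspace a ((m : ℤ) - 1, (n : ℤ) - 1)) = k) :
    xMPspace a ((m : ℤ) - 1, (n : ℤ) - 1) ≤ MQspace a ((m : ℤ) - 1, (n : ℤ) - 1) ∧
    Module.finrank ℂ (xMPspace a ((m : ℤ) - 1, (n : ℤ) - 1)) = 4 * k := by
  set d : ℤ × ℤ := ((m : ℤ) - 1, (n : ℤ) - 1) with hdd
  constructor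
  · rw [xMPspace, Submodule.span_le]
    rintro x hx
    obtain ⟨i, hmem⟩ := Set.mem_iUnion.1 hx
    obtain ⟨P, hP, rfl⟩ := hmem
    rw [SetLike.mem_coe, MPspace_eq] at hP
    obtain ⟨A, hA, rfl⟩ := hP
    show planePoly A * X i ∈ (MQspace a d : Set _)
    rw [← quadPoly_psi]
    exact SetLike.mem_coe.2 (Submodule.subset_span ⟨psi A i, psi_mem a d A hA i, rfl⟩)
  · have hkS : Module.finrank ℂ ↥(syzSpace a d) = k := by
      rw [← hk, MPspace_eq]
      exact (Submodule.equivMapOfInjective planePolyₗ planePolyₗ_inj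
        (syzSpace a d)).finrank_eq
    have hx : xMPspace a d = LinearMap.range (Fmap a d) := (range_Fmap a d).symm
    have e : (Fin 4 → ↥(syzSpace a d)) ≃ₗ[ℂ] ↥(LinearMap.range (Fmap a d)) :=
      LinearEquiv.ofInjective (Fmap a d) (Fmap_inj hB6)
    letI : Module.Free ℂ ↥(syzSpace a d) := Module.Free.of_divisionRing ℂ _
    have hr : Module.rank ℂ (Fin 4 → ↥(syzSpace a d)) =
        4 * Module.rank ℂ ↥(syzSpace a d) := by
      rw [rank_fun]
      norm_num
    have hfr : Module.finrank ℂ (Fin 4 → ↥(syzSpace a d)) =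
        4 * Module.finrank ℂ ↥(syzSpace a d) := by
      rw [Module.finrank, Module.finrank, hr, Cardinal.toNat_mul]
      norm_num
    rw [hx, ← e.finrank_eq, hfr, hkS]
end
end
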